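/- arXiv:2501.18964 — 2 statements merged into one kernel-verified Lean document; each statement's English description precedes it below -/
import Mathlib

section
/- Let (σ_v)_{v ∈ L_o^{edge}} be a portrait between the edge-path languages of two cubically labeled CAT(0) cube complexes satisfying conditions comm, par, inv, and end (but not necessarily tree). If v, w ∈ L_o^{edge} differ by a single cancellation-move v = u₁ s s⁻¹ u₂, w = u₁ u₂, then σ(v) and σ(w) differ by a single cancellation-move; if v and w differ by a single commutation-move v = u₁ s t u₂, w = u₁ t s u₂ with [s,t]=1, then σ(v) and σ(w) differ by a single commutation-move. Consequently v and w are related by a finite sequence of these moves if and only if σ(v) and σ(w) are. -/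
/-!
The forward direction is a computation. By (inv) and (end), the image of `u s s⁻¹ w` is
`σ(u) σ_u(s) σ_u(s)⁻¹` followed by the image of `w` read from `u`, which is also what follows
`σ(u)` in `σ(u w)`; by (par) and (end), the images of `u s t w` and `u t s w` differ exactly by
swapping `σ_u(s)` and `σ_u(t)`, which commute by (comm).

For the converse, cancellation together with commutation is a confluent rewriting system on
arbitrary words: a cancellation survives commutations once it is allowed to act across letters
commuting with the cancelled one, its critical pairs with an ordinary cancellation close, and
induction on the length does the rest. So if `σ(v)` and `σ(w)` are related by moves, both reduce
to a common word. Every reduction step starting at an image `σ(v)` lifts to a move starting at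
`v`: injectivity of `σ_{us}` recognises a cancelled pair `σ_u(s) σ_{us}(t)` as coming from
`t = s⁻¹`, and (comm) with (inv) shows that a commuting pair of images comes from a commuting
pair. Since `σ` is injective on `L_o^{edge}`, the two lifted reductions end at the same word.
-/

/-- A locally finite CAT(0) cube complex equipped with a cubical edge-labeling,
encoded combinatorially: `V` are the vertices, `S` the (finite) label set with its
fixed-point-free involution `inv` (edge reversal), and `δ v s` is the endpoint of
the outgoing edge at `v` labeled `s` (if it exists).  Injectivity of the labeling
on outgoing edges is built in by determinism of `δ`.  `rev` encodes property (4)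
(the reversed edge carries the inverse label), `edge_unique` says there is at most
one edge between two vertices, and `sq_det` encodes property (3): whether two
outgoing edges span a square depends only on their labels. -/
structure CC where
  V : Type
  S : Type
  finS : Finite S
  inv : S → S
  inv_inv : ∀ s, inv (inv s) = s
  inv_ne : ∀ s, inv s ≠ s
  δ : V → S → Option V
  rev : ∀ v s w, δ v s = some w → δ w (inv s) = some v
  edge_unique : ∀ v s t w, δ v s = some w → δ v t = some w → s = t
  sq_det : ∀ s t v, (δ v s).isSome → (δ v t).isSome →
    (∃ u a b c, δ u s = some a ∧ δ u t = some b ∧ δ a t = some c ∧ δ b s = some c ∧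
      a ≠ b ∧ u ≠ a ∧ u ≠ b ∧ u ≠ c ∧ a ≠ c ∧ b ≠ c) →
    (∃ a b c, δ v s = some a ∧ δ v t = some b ∧ δ a t = some c ∧ δ b s = some c ∧
      a ≠ b ∧ v ≠ a ∧ v ≠ b ∧ v ≠ c ∧ a ≠ c ∧ b ≠ c)

namespace CC

/-- The outgoing edges at `v` labeled `s` and `t` span a (embedded) square. -/
def Spans (X : CC) (v : X.V) (s t : X.S) : Prop :=
  ∃ a b c, X.δ v s = some a ∧ X.δ v t = some b ∧ X.δ a t = some c ∧ X.δ b s = some c ∧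
    a ≠ b ∧ v ≠ a ∧ v ≠ b ∧ v ≠ c ∧ a ≠ c ∧ b ≠ c

/-- The labels `s` and `t` commute, `[s,t] = 1`: at some (equivalently, by `sq_det`,
any) vertex carrying both, the corresponding edges span a square. -/
def Comm (X : CC) (s t : X.S) : Prop := ∃ v, X.Spans v s t

/-- Follow the edge-path spelling the word `w` from a vertex. -/
def follow (X : CC) : List X.S → X.V → Option X.V
  | [], v => some v
  | s :: w, v => (X.δ v s).bind (follow X w)

/-- The edge-path language `L_o^{edge}`: words spelled by edge-paths starting at `o`. -/
def Lang (X : CC) (o : X.V) : Set (List X.S) := {w | (follow X w o).isSome}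

/-- `w` is a reduced word from `o` (a combinatorial geodesic: no hyperplane is
crossed twice, equivalently `w` has minimal length among all words from `o`
with the same endpoint). -/
def Reduced (X : CC) (o : X.V) (w : List X.S) : Prop :=
  ∃ p, follow X w o = some p ∧ ∀ w', follow X w' o = some p → w.length ≤ w'.length

/-- `Σ_v^{edge}`: the labels of outgoing edges at the endpoint of `v`. -/
def EdgeAt (X : CC) (o : X.V) (v : List X.S) : Set X.S := {s | v ++ [s] ∈ Lang X o}

end CC

/-- `σ_v(w)`: apply a portrait letter by letter along `w`, starting at prefix `v`. -/
def sigmaFrom {A B : Type} (σ : List A → A → B) : List A → List A → List B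
  | _, [] => []
  | v, s :: w => σ v s :: sigmaFrom σ (v ++ [s]) w

/-- The induced word map `σ(s₁…sₙ) = σ_ε(s₁)…σ_{s₁…sₙ₋₁}(sₙ)`. -/
def sigmaW {A B : Type} (σ : List A → A → B) (w : List A) : List B :=
  sigmaFrom σ [] w

def Cancel (X : CC) (v w : List X.S) : Prop :=
  ∃ u1 u2 s, v = u1 ++ s :: X.inv s :: u2 ∧ w = u1 ++ u2

def Swap (X : CC) (v w : List X.S) : Prop :=
  ∃ u1 u2 s t, X.Comm s t ∧ v = u1 ++ s :: t :: u2 ∧ w = u1 ++ t :: s :: u2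

/-- One move between words of `L_o^{edge}`. -/
def MoveL (X : CC) (o : X.V) (v w : List X.S) : Prop :=
  (Cancel X v w ∨ Cancel X w v ∨ Swap X v w) ∧ v ∈ CC.Lang X o ∧ w ∈ CC.Lang X o

/-- One move between arbitrary words over the label alphabet. -/
def MoveFree (Y : CC) (v w : List Y.S) : Prop :=
  Cancel Y v w ∨ Cancel Y w v ∨ Swap Y v w

namespace CC

variable {Z : CC}

theorem Spans.symm {v : Z.V} {s t : Z.S} (h : Z.Spans v s t) : Z.Spans v t s := by
  obtain ⟨a, b, c, h1, h2, h3, h4, n1, n2, n3, n4, n5, n6⟩ := h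
  exact ⟨b, a, c, h2, h1, h4, h3, n1.symm, n3, n2, n4, n6, n5⟩

theorem Comm.symm {s t : Z.S} (h : Z.Comm s t) : Z.Comm t s :=
  let ⟨v, hv⟩ := h; ⟨v, hv.symm⟩

theorem Comm.inv_left {s t : Z.S} (h : Z.Comm s t) : Z.Comm (Z.inv s) t := by
  obtain ⟨u, a, b, c, h1, h2, h3, h4, n1, n2, n3, n4, n5, n6⟩ := h
  exact ⟨a, u, c, b, Z.rev _ _ _ h1, h3, h2, Z.rev _ _ _ h4,
    n4, fun e => n2 e.symm, n5, n1, n3, fun e => n6 e.symm⟩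

theorem comm_inv_left_iff {s t : Z.S} : Z.Comm (Z.inv s) t ↔ Z.Comm s t :=
  ⟨fun h => Z.inv_inv s ▸ h.inv_left, Comm.inv_left⟩

theorem Comm.close_square {s t : Z.S} (h : Z.Comm s t) {m a c : Z.V}
    (hs : Z.δ m s = some a) (ht : Z.δ a t = some c) :
    ∃ b, Z.δ m t = some b ∧ Z.δ b s = some c := by
  have hrev : Z.δ a (Z.inv s) = some m := Z.rev _ _ _ hs
  -- `sq_det` at `a` yields the square on `s⁻¹, t`, whose far side is the missing path
  obtain ⟨m', b, c', h1, h2, h3, h4, -⟩ :=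
    Z.sq_det (Z.inv s) t a (by simp [hrev]) (by simp [ht]) h.inv_left
  obtain rfl : m' = m := Option.some.inj (h1.symm.trans hrev)
  obtain rfl : b = c := Option.some.inj (h2.symm.trans ht)
  exact ⟨c', h3, Z.inv_inv s ▸ Z.rev _ _ _ h4⟩

@[simp] theorem follow_nil (m : Z.V) : follow Z [] m = some m := rfl

@[simp] theorem follow_cons (s : Z.S) (w : List Z.S) (m : Z.V) :
    follow Z (s :: w) m = (Z.δ m s).bind (follow Z w) := rfl

theorem follow_append (u w : List Z.S) (m : Z.V) :
    follow Z (u ++ w) m = (follow Z u m).bind (follow Z w) := by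
  induction u generalizing m with
  | nil => simp
  | cons s u ih => simp [ih, Option.bind_assoc]

variable {o : Z.V}

theorem mem_lang_of_append_mem {u w : List Z.S} (h : u ++ w ∈ Lang Z o) : u ∈ Lang Z o := by
  change (follow Z (u ++ w) o).isSome at h
  rw [follow_append] at h
  exact Option.isSome_of_isSome_bind h

theorem mem_lang_of_follow_eq {u w : List Z.S} (h : follow Z u o = follow Z w o)
    (hw : w ∈ Lang Z o) : u ∈ Lang Z o := by
  simpa [Lang, h] using hw

theorem follow_append_congr {u w : List Z.S} (h : follow Z u o = follow Z w o) (r : List Z.S) :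
    follow Z (u ++ r) o = follow Z (w ++ r) o := by
  rw [follow_append, follow_append, h]

theorem follow_cancel {u : List Z.S} {s : Z.S} (h : u ++ [s] ∈ Lang Z o) :
    follow Z (u ++ [s, Z.inv s]) o = follow Z u o := by
  change (follow Z (u ++ [s]) o).isSome at h
  rw [follow_append] at h ⊢
  cases hm : follow Z u o with
  | none => simp [hm] at h
  | some m =>
    cases ha : Z.δ m s with
    | none => simp [hm, ha] at h
    | some a => simp [ha, Z.rev _ _ _ ha]

theorem Comm.follow_swap {u : List Z.S} {s t : Z.S} (hC : Z.Comm s t)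
    (h : u ++ [s, t] ∈ Lang Z o) :
    follow Z (u ++ [t, s]) o = follow Z (u ++ [s, t]) o := by
  change (follow Z (u ++ [s, t]) o).isSome at h
  simp only [follow_append] at h ⊢
  cases hm : follow Z u o with
  | none => rfl
  | some m =>
    cases ha : Z.δ m s with
    | none => simp [hm, ha] at h
    | some a =>
      cases hc : Z.δ a t with
      | none => simp [hm, ha, hc] at h
      | some c =>
        obtain ⟨b, hb, hbc⟩ := hC.close_square ha hc
        simp [ha, hb, hc, hbc]

theorem mem_edgeAt_of_append_cons_mem {u w : List Z.S} {s : Z.S} (h : u ++ s :: w ∈ Lang Z o) :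
    s ∈ EdgeAt Z o u :=
  mem_lang_of_append_mem (w := w) (by simpa using h)

theorem mem_edgeAt_of_append_cons_cons_mem {u w : List Z.S} {s t : Z.S}
    (h : u ++ s :: t :: w ∈ Lang Z o) : t ∈ EdgeAt Z o (u ++ [s]) :=
  mem_edgeAt_of_append_cons_mem (w := w) (by simpa using h)

theorem inv_mem_edgeAt {u : List Z.S} {s : Z.S} (h : s ∈ EdgeAt Z o u) :
    Z.inv s ∈ EdgeAt Z o (u ++ [s]) :=
  mem_lang_of_follow_eq (by simpa using follow_cancel h) (mem_lang_of_append_mem h)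

theorem follow_cancel_infix {u w : List Z.S} {s : Z.S} (h : u ++ s :: Z.inv s :: w ∈ Lang Z o) :
    follow Z (u ++ w) o = follow Z (u ++ s :: Z.inv s :: w) o := by
  simpa using (follow_append_congr (follow_cancel (mem_edgeAt_of_append_cons_mem h)) w).symm

theorem Comm.follow_swap_infix {u w : List Z.S} {s t : Z.S} (hC : Z.Comm s t)
    (h : u ++ s :: t :: w ∈ Lang Z o) :
    follow Z (u ++ t :: s :: w) o = follow Z (u ++ s :: t :: w) o := by
  simpa using follow_append_congr
    (hC.follow_swap (mem_lang_of_append_mem (w := w) (by simpa using h))) w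

end CC

section ListSplit

variable {A : Type}

theorem append_eq_append_cons_cons_cases {l r p q : List A} {a b : A}
    (h : l ++ r = p ++ a :: b :: q) :
    (∃ w, l = p ++ a :: b :: w ∧ q = w ++ r) ∨ (l = p ++ [a] ∧ r = b :: q) ∨
      (∃ w, p = l ++ w ∧ r = w ++ a :: b :: q) := by
  rcases List.append_eq_append_iff.mp h with ⟨w, rfl, rfl⟩ | ⟨c, rfl, hq⟩
  · exact .inr (.inr ⟨w, rfl, rfl⟩)
  · rcases c with _ | ⟨x, _ | ⟨y, c⟩⟩ <;> simp_all

theorem append_cons_append_cons_eq_cases {u1 u2 u3 p q : List A} {s t a b : A}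
    (h : u1 ++ s :: (u2 ++ t :: u3) = p ++ a :: b :: q) :
    (∃ w, u1 = p ++ a :: b :: w ∧ q = w ++ s :: (u2 ++ t :: u3)) ∨
    (u1 = p ++ [a] ∧ b = s ∧ q = u2 ++ t :: u3) ∨
    (p = u1 ∧ a = s ∧ u2 = [] ∧ b = t ∧ q = u3) ∨
    (p = u1 ∧ a = s ∧ ∃ w, u2 = b :: w ∧ q = w ++ t :: u3) ∨
    (∃ w w', u2 = w ++ a :: b :: w' ∧ p = u1 ++ s :: w ∧ q = w' ++ t :: u3) ∨
    (∃ w, u2 = w ++ [a] ∧ p = u1 ++ s :: w ∧ b = t ∧ q = u3) ∨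
    (p = u1 ++ s :: u2 ∧ a = t ∧ ∃ w, u3 = b :: w ∧ q = w) ∨
    (∃ w w', u3 = w ++ a :: b :: w' ∧ p = u1 ++ s :: (u2 ++ t :: w) ∧ q = w') := by
  rcases append_eq_append_cons_cons_cases h with ⟨w, h1, h2⟩ | ⟨h1, h2⟩ | ⟨w, rfl, h2⟩
  · exact .inl ⟨w, h1, h2⟩
  · simp_all
  · rcases w with _ | ⟨x, w⟩
    · rcases u2 with _ | ⟨c, u2⟩ <;> simp_all
    · simp only [List.cons_append, List.cons.injEq] at h2
      obtain ⟨rfl, h2⟩ := h2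
      rcases append_eq_append_cons_cons_cases h2 with
        ⟨w', h3, h4⟩ | ⟨h3, h4⟩ | ⟨w', rfl, h4⟩
      · exact .inr <| .inr <| .inr <| .inr <| .inl ⟨w, w', h3, rfl, h4⟩
      · simp_all
      · rcases w' with _ | ⟨y, w'⟩ <;> simp_all

end ListSplit

namespace CC

variable {Z : CC}

def ReduceStep (Z : CC) (y z : List Z.S) : Prop := Cancel Z y z ∨ Swap Z y z

abbrev Reduces (Z : CC) := Relation.ReflTransGen (ReduceStep Z)

abbrev SwapEquiv (Z : CC) := Relation.ReflTransGen (Swap Z)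

/-- Unlike `Cancel`, this is stable under commutation moves (`CancelAcross.swap`). -/
def CancelAcross (Z : CC) (y z : List Z.S) : Prop :=
  ∃ u1 u2 u3 s, (∀ a ∈ u2, Z.Comm s a) ∧
    y = u1 ++ s :: (u2 ++ Z.inv s :: u3) ∧ z = u1 ++ (u2 ++ u3)

theorem _root_.Swap.symm {y z : List Z.S} (h : Swap Z y z) : Swap Z z y :=
  let ⟨u1, u2, s, t, hC, hy, hz⟩ := h; ⟨u1, u2, t, s, hC.symm, hz, hy⟩

instance : Std.Symm (Swap Z) := ⟨fun _ _ => _root_.Swap.symm⟩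

theorem SwapEquiv.reduces {y z : List Z.S} (h : Z.SwapEquiv y z) : Z.Reduces y z :=
  Relation.ReflTransGen.mono (fun _ _ => Or.inr) _ _ h

theorem ReduceStep.length_le {y z : List Z.S} (h : Z.ReduceStep y z) :
    z.length ≤ y.length := by
  rcases h with ⟨u1, u2, s, rfl, rfl⟩ | ⟨u1, u2, s, t, -, rfl, rfl⟩ <;> simp +arith

theorem Reduces.length_le {y z : List Z.S} (h : Z.Reduces y z) : z.length ≤ y.length := by
  induction h with
  | refl => rfl
  | tail _ hstep ih => exact hstep.length_le.trans ih

theorem _root_.Cancel.length_lt {y z : List Z.S} (h : Cancel Z y z) : z.length < y.length := by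
  obtain ⟨u1, u2, s, rfl, rfl⟩ := h
  simp

theorem swapEquiv_across {x : Z.S} :
    ∀ (u p r : List Z.S), (∀ a ∈ u, Z.Comm x a) →
      Z.SwapEquiv (p ++ x :: (u ++ r)) (p ++ (u ++ x :: r))
  | [], _, _, _ => .refl
  | a :: u, p, r, h =>
    .head ⟨p, u ++ r, x, a, h a (by simp), rfl, rfl⟩ <| by
      simpa using swapEquiv_across u (p ++ [a]) r fun b hb => h b (by simp [hb])

theorem _root_.Cancel.cancelAcross {y z : List Z.S} (h : Cancel Z y z) : Z.CancelAcross y z :=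
  let ⟨u1, u2, s, hy, hz⟩ := h
  ⟨u1, [], u2, s, by simp, by simpa using hy, by simpa using hz⟩

theorem CancelAcross.reduces {y z : List Z.S} (h : Z.CancelAcross y z) : Z.Reduces y z := by
  obtain ⟨u1, u2, u3, s, hcomm, rfl, rfl⟩ := h
  exact (swapEquiv_across u2 u1 (Z.inv s :: u3) hcomm).reduces.tail
    (Or.inl ⟨u1 ++ u2, u3, s, by simp, by simp⟩)

theorem CancelAcross.swap {y y' z : List Z.S} (hz : Z.CancelAcross y z) (hy : Swap Z y y') :
    ∃ z', Z.CancelAcross y' z' ∧ Relation.ReflGen (Swap Z) z z' := by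
  obtain ⟨u1, u2, u3, s, hcomm, rfl, rfl⟩ := hz
  obtain ⟨p, q, a, b, hab, hy, rfl⟩ := hy
  rcases append_cons_append_cons_eq_cases hy with ⟨w, rfl, rfl⟩ | ⟨rfl, rfl, rfl⟩ |
    ⟨rfl, rfl, rfl, rfl, rfl⟩ | ⟨rfl, rfl, w, rfl, rfl⟩ | ⟨w, w', rfl, rfl, rfl⟩ |
    ⟨w, rfl, rfl, rfl, rfl⟩ | ⟨rfl, rfl, w, rfl, rfl⟩ | ⟨w, w', rfl, rfl, rfl⟩
  · exact ⟨_, ⟨p ++ b :: a :: w, u2, u3, s, hcomm, by simp, rfl⟩,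
      .single ⟨p, w ++ (u2 ++ u3), a, b, hab, by simp, by simp⟩⟩
  · refine ⟨_, ⟨p, a :: u2, u3, b, ?_, by simp, rfl⟩, by simpa using .refl⟩
    simpa [hab.symm] using hcomm
  · exact ⟨_, ⟨p, [], q, Z.inv a, by simp, by simp [Z.inv_inv], rfl⟩, .refl⟩
  · exact ⟨_, ⟨p ++ [b], w, u3, a, fun c hc => hcomm c (by simp [hc]), by simp, rfl⟩,
      by simpa using .refl⟩
  · refine ⟨_, ⟨u1, w ++ b :: a :: w', u3, s, ?_, by simp, rfl⟩,
      .single ⟨u1 ++ w, w' ++ u3, a, b, hab, by simp, by simp⟩⟩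
    intro c hc
    exact hcomm c (by simp only [List.mem_append, List.mem_cons] at hc ⊢; tauto)
  · exact ⟨_, ⟨u1, w, a :: q, s, fun c hc => hcomm c (by simp [hc]), by simp, rfl⟩,
      by simpa using .refl⟩
  · refine ⟨_, ⟨u1, u2 ++ [b], q, s, ?_, by simp, rfl⟩, by simpa using .refl⟩
    simpa [comm_inv_left_iff.mp hab, or_imp, forall_and] using hcomm
  · exact ⟨_, ⟨u1, u2, w ++ b :: a :: q, s, hcomm, by simp, rfl⟩,
      .single ⟨u1 ++ u2 ++ w, q, a, b, hab, by simp, by simp⟩⟩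

theorem CancelAcross.swapEquiv {y y' z : List Z.S} (hz : Z.CancelAcross y z)
    (hy : Z.SwapEquiv y y') : ∃ z', Z.CancelAcross y' z' ∧ Z.SwapEquiv z z' := by
  induction hy with
  | refl => exact ⟨z, hz, .refl⟩
  | tail _ hstep ih =>
    obtain ⟨z₁, hz₁, hzz₁⟩ := ih
    obtain ⟨z', hz', hz₁z'⟩ := hz₁.swap hstep
    exact ⟨z', hz', hzz₁.trans hz₁z'.to_reflTransGen⟩

theorem CancelAcross.join_cancel {y z c : List Z.S} (hz : Z.CancelAcross y z)
    (hc : Cancel Z y c) : Relation.Join Z.Reduces z c := by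
  obtain ⟨u1, u2, u3, s, hcomm, rfl, rfl⟩ := hz
  obtain ⟨p, q, a, hy, rfl⟩ := hc
  rcases append_cons_append_cons_eq_cases hy with ⟨w, rfl, rfl⟩ | ⟨rfl, rfl, rfl⟩ |
    ⟨rfl, rfl, rfl, -, rfl⟩ | ⟨rfl, rfl, w, rfl, rfl⟩ | ⟨w, w', rfl, rfl, rfl⟩ |
    ⟨w, rfl, rfl, hinv, rfl⟩ | ⟨rfl, rfl, w, rfl, rfl⟩ | ⟨w, w', rfl, rfl, rfl⟩
  · exact ⟨p ++ w ++ (u2 ++ u3), .single (Or.inl ⟨p, w ++ (u2 ++ u3), a, by simp, by simp⟩),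
      CancelAcross.reduces ⟨p ++ w, u2, u3, s, hcomm, by simp, by simp⟩⟩
  · refine ⟨_, SwapEquiv.reduces ?_, .refl⟩
    simpa [Z.inv_inv] using
      swapEquiv_across u2 p u3 fun c hc => comm_inv_left_iff.mp (hcomm c hc)
  · exact ⟨_, .refl, .refl⟩
  · refine ⟨_, SwapEquiv.reduces ?_, .refl⟩
    simpa using swapEquiv_across w p u3 fun c hc => (hcomm c (by simp [hc])).inv_left
  · refine ⟨u1 ++ w ++ (w' ++ u3), .single (Or.inl ⟨u1 ++ w, w' ++ u3, a, by simp, by simp⟩),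
      CancelAcross.reduces ⟨u1, w ++ w', u3, s, fun c hc => hcomm c ?_, by simp, by simp⟩⟩
    simp only [List.mem_append, List.mem_cons] at hc ⊢
    tauto
  · obtain rfl : a = s := by simpa [Z.inv_inv] using congrArg Z.inv hinv
    refine ⟨_, .refl, SwapEquiv.reduces ?_⟩
    simpa using swapEquiv_across w u1 q fun c hc => hcomm c (by simp [hc])
  · refine ⟨_, .refl, SwapEquiv.reduces ?_⟩
    simpa [Z.inv_inv] using swapEquiv_across u2 u1 q hcomm
  · exact ⟨u1 ++ u2 ++ w ++ q, .single (Or.inl ⟨u1 ++ u2 ++ w, q, a, by simp, by simp⟩),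
      CancelAcross.reduces ⟨u1, u2, w ++ q, s, hcomm, by simp, by simp⟩⟩

theorem _root_.Cancel.join_of_swapEquiv {x x' y y' : List Z.S} (hy : Cancel Z x y)
    (hx : Z.SwapEquiv x x') (hy' : Cancel Z x' y') : Relation.Join Z.Reduces y y' := by
  obtain ⟨z, hz, hyz⟩ := hy.cancelAcross.swapEquiv hx
  obtain ⟨d, hzd, hy'd⟩ := hz.join_cancel hy'
  exact ⟨d, hyz.reduces.trans hzd, hy'd⟩

theorem Reduces.swapEquiv_or_cancel {y z : List Z.S} (h : Z.Reduces y z) :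
    Z.SwapEquiv y z ∨ ∃ x x', Z.SwapEquiv y x ∧ Cancel Z x x' ∧ Z.Reduces x' z := by
  induction h using Relation.ReflTransGen.head_induction_on with
  | refl => exact .inl .refl
  | head hstep hrest ih =>
    rcases hstep with hcancel | hswap
    · exact .inr ⟨_, _, .refl, hcancel, hrest⟩
    · rcases ih with h | ⟨x, x', h, hx, hx'⟩
      · exact .inl (.head hswap h)
      · exact .inr ⟨x, x', .head hswap h, hx, hx'⟩

theorem reduces_join {y b c : List Z.S} (hb : Z.Reduces y b) (hc : Z.Reduces y c) :
    Relation.Join Z.Reduces b c := by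
  rcases hb.swapEquiv_or_cancel with hyb | ⟨x, x₁, hyx, hx₁, hx₁b⟩
  · exact ⟨c, (symm hyb : Z.SwapEquiv b y).reduces.trans hc, .refl⟩
  rcases hc.swapEquiv_or_cancel with hyc | ⟨x', x₁', hyx', hx₁', hx₁'c⟩
  · exact ⟨b, .refl, (symm hyc : Z.SwapEquiv c y).reduces.trans hb⟩
  obtain ⟨d, hx₁d, hx₁'d⟩ := hx₁.join_of_swapEquiv ((symm hyx).trans hyx') hx₁'
  have hx₁y : x₁.length < y.length := hx₁.length_lt.trans_le hyx.reduces.length_le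
  have hx₁'y : x₁'.length < y.length := hx₁'.length_lt.trans_le hyx'.reduces.length_le
  have hdy : d.length < y.length := hx₁d.length_le.trans_lt hx₁y
  obtain ⟨e, hbe, hde⟩ := reduces_join hx₁b hx₁d
  obtain ⟨e', hce', hde'⟩ := reduces_join hx₁'c hx₁'d
  obtain ⟨f, hef, he'f⟩ := reduces_join hde hde'
  exact ⟨f, hbe.trans hef, hce'.trans he'f⟩
termination_by y.length

theorem join_reduces_of_moveFree {y z : List Z.S}
    (h : Relation.ReflTransGen (MoveFree Z) y z) : Relation.Join Z.Reduces y z := by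
  refine Relation.reflTransGen_le_of_equivalence_of_le
    (Relation.equivalence_join fun _ _ _ => reduces_join) ?_ _ _ h
  rintro y z (h | h | h)
  · exact ⟨z, .single (Or.inl h), .refl⟩
  · exact ⟨y, .refl, .single (Or.inl h)⟩
  · exact ⟨z, .single (Or.inr h), .refl⟩

end CC

section SigmaW

variable {A B : Type} {σ : List A → A → B}

@[simp] theorem sigmaFrom_nil (c : List A) : sigmaFrom σ c [] = [] := rfl

@[simp] theorem sigmaFrom_cons (c : List A) (s : A) (w : List A) :
    sigmaFrom σ c (s :: w) = σ c s :: sigmaFrom σ (c ++ [s]) w := rfl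

@[simp] theorem length_sigmaFrom (c w : List A) : (sigmaFrom σ c w).length = w.length := by
  induction w generalizing c <;> simp [*]

theorem sigmaFrom_append (c u w : List A) :
    sigmaFrom σ c (u ++ w) = sigmaFrom σ c u ++ sigmaFrom σ (c ++ u) w := by
  induction u generalizing c <;> simp [*]

theorem sigmaW_append (u w : List A) : sigmaW σ (u ++ w) = sigmaW σ u ++ sigmaFrom σ u w := by
  simp [sigmaW, sigmaFrom_append]

theorem exists_of_sigmaW_eq_append {v : List A} {P Q : List B} (h : sigmaW σ v = P ++ Q) :
    ∃ p q, v = p ++ q ∧ sigmaW σ p = P ∧ sigmaFrom σ p q = Q := by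
  have hlen : v.length = P.length + Q.length := by
    simpa [sigmaW] using congrArg List.length h
  refine ⟨v.take P.length, v.drop P.length, (List.take_append_drop _ _).symm, ?_⟩
  rw [← List.take_append_drop P.length v, sigmaW_append] at h
  exact List.append_inj h (by simp [sigmaW]; omega)

theorem exists_of_sigmaW_eq_append_cons_cons {v : List A} {P Q : List B} {a b : B}
    (h : sigmaW σ v = P ++ a :: b :: Q) :
    ∃ p x y q, v = p ++ x :: y :: q ∧ sigmaW σ p = P ∧
      σ p x = a ∧ σ (p ++ [x]) y = b := by
  obtain ⟨p, _ | ⟨x, _ | ⟨y, q⟩⟩, rfl, rfl, hq⟩ := exists_of_sigmaW_eq_append h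
  · simp at hq
  · simp at hq
  · simp only [sigmaFrom_cons, List.cons.injEq] at hq
    exact ⟨p, x, y, q, rfl, rfl, hq.1, hq.2.1⟩

end SigmaW

open CC

section Portrait

variable {X Y : CC} {o : X.V} {σ : List X.S → X.S → Y.S}

def PortraitInj (o : X.V) (σ : List X.S → X.S → Y.S) : Prop :=
  ∀ v ∈ Lang X o, Set.InjOn (σ v) (EdgeAt X o v)

def PortraitComm (o : X.V) (σ : List X.S → X.S → Y.S) : Prop :=
  ∀ v ∈ Lang X o, ∀ s ∈ EdgeAt X o v, ∀ t ∈ EdgeAt X o v,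
    X.Comm s t ↔ Y.Comm (σ v s) (σ v t)

def PortraitPar (o : X.V) (σ : List X.S → X.S → Y.S) : Prop :=
  ∀ v ∈ Lang X o, ∀ s ∈ EdgeAt X o v, ∀ t ∈ EdgeAt X o v,
    X.Comm s t → σ (v ++ [s]) t = σ v t

def PortraitInv (o : X.V) (σ : List X.S → X.S → Y.S) : Prop :=
  ∀ v ∈ Lang X o, ∀ s ∈ EdgeAt X o v, σ (v ++ [s]) (X.inv s) = Y.inv (σ v s)

def PortraitEnd (o : X.V) (σ : List X.S → X.S → Y.S) : Prop :=
  ∀ v ∈ Lang X o, ∀ w ∈ Lang X o, follow X v o = follow X w o → σ v = σ w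

theorem sigmaFrom_congr (hend : PortraitEnd o σ) {a b q : List X.S}
    (hf : follow X a o = follow X b o) (hq : a ++ q ∈ Lang X o) :
    sigmaFrom σ a q = sigmaFrom σ b q := by
  induction q generalizing a b with
  | nil => rfl
  | cons s q ih =>
    have ha : a ∈ Lang X o := mem_lang_of_append_mem hq
    rw [sigmaFrom_cons, sigmaFrom_cons, hend a ha b (mem_lang_of_follow_eq hf.symm ha) hf,
      ih (follow_append_congr hf [s]) (by simpa using hq)]

theorem sigmaFrom_inj (hinj : PortraitInj o σ) {p q q' : List X.S}
    (hq : p ++ q ∈ Lang X o) (hq' : p ++ q' ∈ Lang X o)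
    (h : sigmaFrom σ p q = sigmaFrom σ p q') : q = q' := by
  induction q generalizing p q' with
  | nil => simpa using (congrArg List.length h).symm
  | cons s q ih =>
    obtain _ | ⟨s', q'⟩ := q'
    · simpa using congrArg List.length h
    simp only [sigmaFrom_cons, List.cons.injEq] at h
    obtain rfl : s = s' := hinj p (mem_lang_of_append_mem hq) (mem_edgeAt_of_append_cons_mem hq)
      (mem_edgeAt_of_append_cons_mem hq') h.1
    rw [ih (by simpa using hq) (by simpa using hq') h.2]

theorem sigmaW_injOn (hinj : PortraitInj o σ) : Set.InjOn (sigmaW σ) (Lang X o) :=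
  fun _ hv _ hw h => sigmaFrom_inj hinj (p := []) hv hw h

theorem sigmaW_cancel (hinv : PortraitInv o σ) (hend : PortraitEnd o σ)
    {u w : List X.S} {s : X.S} (hv : u ++ s :: X.inv s :: w ∈ Lang X o) :
    sigmaW σ (u ++ s :: X.inv s :: w) =
      sigmaW σ u ++ σ u s :: Y.inv (σ u s) :: sigmaFrom σ u w := by
  have hs : s ∈ EdgeAt X o u := mem_edgeAt_of_append_cons_mem hv
  rw [sigmaW_append, sigmaFrom_cons, sigmaFrom_cons, hinv u (mem_lang_of_append_mem hs) s hs,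
    sigmaFrom_congr hend (by simpa using follow_cancel hs) (by simpa using hv)]

theorem sigmaW_comm (hpar : PortraitPar o σ) {u w : List X.S} {s t : X.S} (hC : X.Comm s t)
    (hv : u ++ s :: t :: w ∈ Lang X o) :
    sigmaW σ (u ++ s :: t :: w) =
      sigmaW σ u ++ σ u s :: σ u t :: sigmaFrom σ (u ++ [s, t]) w := by
  have hs : s ∈ EdgeAt X o u := mem_edgeAt_of_append_cons_mem hv
  have ht : t ∈ EdgeAt X o u :=
    mem_edgeAt_of_append_cons_mem (mem_lang_of_follow_eq (hC.follow_swap_infix hv) hv)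
  rw [sigmaW_append, sigmaFrom_cons, sigmaFrom_cons,
    hpar u (mem_lang_of_append_mem hs) s hs t ht hC]
  simp

theorem sigmaW_swap (hpar : PortraitPar o σ) (hend : PortraitEnd o σ)
    {u w : List X.S} {s t : X.S} (hC : X.Comm s t) (hv : u ++ s :: t :: w ∈ Lang X o) :
    sigmaW σ (u ++ t :: s :: w) =
      sigmaW σ u ++ σ u t :: σ u s :: sigmaFrom σ (u ++ [s, t]) w := by
  have hv' : u ++ t :: s :: w ∈ Lang X o := mem_lang_of_follow_eq (hC.follow_swap_infix hv) hv
  rw [sigmaW_comm hpar hC.symm hv', sigmaFrom_congr hend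
    (hC.follow_swap (mem_lang_of_append_mem (w := w) (by simpa using hv))) (by simpa using hv')]

theorem cancel_sigmaW (hinv : PortraitInv o σ) (hend : PortraitEnd o σ) {u w : List X.S}
    {s : X.S} (hv : u ++ s :: X.inv s :: w ∈ Lang X o) :
    Cancel Y (sigmaW σ (u ++ s :: X.inv s :: w)) (sigmaW σ (u ++ w)) :=
  ⟨_, _, _, sigmaW_cancel hinv hend hv, sigmaW_append u w⟩

theorem swap_sigmaW (hcomm : PortraitComm o σ) (hpar : PortraitPar o σ) (hend : PortraitEnd o σ)
    {u w : List X.S} {s t : X.S} (hC : X.Comm s t) (hv : u ++ s :: t :: w ∈ Lang X o) :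
    Swap Y (sigmaW σ (u ++ s :: t :: w)) (sigmaW σ (u ++ t :: s :: w)) := by
  have hs : s ∈ EdgeAt X o u := mem_edgeAt_of_append_cons_mem hv
  have ht : t ∈ EdgeAt X o u :=
    mem_edgeAt_of_append_cons_mem (mem_lang_of_follow_eq (hC.follow_swap_infix hv) hv)
  exact ⟨_, _, _, _, (hcomm u (mem_lang_of_append_mem hs) s hs t ht).mp hC,
    sigmaW_comm hpar hC hv, sigmaW_swap hpar hend hC hv⟩

theorem MoveL.moveFree_sigmaW (hcomm : PortraitComm o σ) (hpar : PortraitPar o σ)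
    (hinv : PortraitInv o σ) (hend : PortraitEnd o σ) {v w : List X.S} (h : MoveL X o v w) :
    MoveFree Y (sigmaW σ v) (sigmaW σ w) := by
  obtain ⟨⟨u1, u2, s, rfl, rfl⟩ | ⟨u1, u2, s, rfl, rfl⟩ | ⟨u1, u2, s, t, hC, rfl, rfl⟩,
    hv, hw⟩ := h
  exacts [.inl (cancel_sigmaW hinv hend hv), .inr (.inl (cancel_sigmaW hinv hend hw)),
    .inr (.inr (swap_sigmaW hcomm hpar hend hC hv))]

theorem MoveL.symm {v w : List X.S} (h : MoveL X o v w) : MoveL X o w v := by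
  obtain ⟨hmove | hmove | hmove, hv, hw⟩ := h
  exacts [⟨.inr (.inl hmove), hw, hv⟩, ⟨.inl hmove, hw, hv⟩,
    ⟨.inr (.inr hmove.symm), hw, hv⟩]

instance : Std.Symm (MoveL X o) := ⟨fun _ _ => MoveL.symm⟩

theorem exists_moveL_of_cancel (hinj : PortraitInj o σ) (hinv : PortraitInv o σ)
    (hend : PortraitEnd o σ) {v : List X.S} (hv : v ∈ Lang X o) {y : List Y.S}
    (h : Cancel Y (sigmaW σ v) y) : ∃ v', MoveL X o v v' ∧ sigmaW σ v' = y := by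
  obtain ⟨P, Q, t, hP, rfl⟩ := h
  obtain ⟨p, x, x₁, q, rfl, rfl, rfl, hx₁⟩ := exists_of_sigmaW_eq_append_cons_cons hP
  have hx : x ∈ EdgeAt X o p := mem_edgeAt_of_append_cons_mem hv
  have hp : p ∈ Lang X o := mem_lang_of_append_mem hx
  obtain rfl : x₁ = X.inv x := hinj _ hx (mem_edgeAt_of_append_cons_cons_mem hv)
    (inv_mem_edgeAt hx) (by rw [hx₁, hinv p hp x hx])
  refine ⟨p ++ q, ⟨Or.inl ⟨p, q, x, rfl, rfl⟩, hv,
    mem_lang_of_follow_eq (follow_cancel_infix hv) hv⟩, ?_⟩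
  have hQ : sigmaFrom σ p q = Q := by simpa [hP] using (sigmaW_cancel hinv hend hv).symm
  rw [sigmaW_append, hQ]

theorem exists_moveL_of_swap (hcomm : PortraitComm o σ) (hpar : PortraitPar o σ)
    (hinv : PortraitInv o σ) (hend : PortraitEnd o σ) {v : List X.S} (hv : v ∈ Lang X o)
    {y : List Y.S} (h : Swap Y (sigmaW σ v) y) : ∃ v', MoveL X o v v' ∧ sigmaW σ v' = y := by
  obtain ⟨P, Q, a, b, hab, hP, rfl⟩ := h
  obtain ⟨p, x, x₁, q, rfl, rfl, rfl, rfl⟩ := exists_of_sigmaW_eq_append_cons_cons hP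
  have hx : x ∈ EdgeAt X o p := mem_edgeAt_of_append_cons_mem hv
  have hp : p ∈ Lang X o := mem_lang_of_append_mem hx
  have hx₁ : x₁ ∈ EdgeAt X o (p ++ [x]) := mem_edgeAt_of_append_cons_cons_mem hv
  have hC : X.Comm x x₁ := comm_inv_left_iff.mp <|
    (hcomm _ (mem_lang_of_append_mem hx₁) _ (inv_mem_edgeAt hx) _ hx₁).mpr
      (by rw [hinv p hp x hx]; exact hab.inv_left)
  refine ⟨p ++ x₁ :: x :: q, ⟨Or.inr (Or.inr ⟨p, q, x, x₁, hC, rfl, rfl⟩), hv,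
    mem_lang_of_follow_eq (hC.follow_swap_infix hv) hv⟩, ?_⟩
  have hQ : σ (p ++ [x]) x₁ = σ p x₁ ∧ Q = sigmaFrom σ (p ++ [x, x₁]) q := by
    simpa [hP] using sigmaW_comm hpar hC hv
  rw [sigmaW_swap hpar hend hC hv, hQ.1, hQ.2]

theorem exists_moveL_of_reduces (hinj : PortraitInj o σ) (hcomm : PortraitComm o σ)
    (hpar : PortraitPar o σ) (hinv : PortraitInv o σ) (hend : PortraitEnd o σ)
    {v : List X.S} (hv : v ∈ Lang X o) {y : List Y.S} (h : Y.Reduces (sigmaW σ v) y) :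
    ∃ v', v' ∈ Lang X o ∧ Relation.ReflTransGen (MoveL X o) v v' ∧ sigmaW σ v' = y := by
  induction h with
  | refl => exact ⟨v, hv, .refl, rfl⟩
  | tail _ hstep ih =>
    obtain ⟨v₁, hv₁, hvv₁, rfl⟩ := ih
    obtain ⟨v', hv₁v', rfl⟩ := hstep.elim (exists_moveL_of_cancel hinj hinv hend hv₁)
      (exists_moveL_of_swap hcomm hpar hinv hend hv₁)
    exact ⟨v', hv₁v'.2.2, hvv₁.tail hv₁v', rfl⟩

end Portrait

/-- for a portrait satisfying comm, par, inv and end (tree is not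
needed), a single cancellation-move on `v` corresponds to a single
cancellation-move on `σ(v)`, a single commutation-move corresponds to a single
commutation-move, and consequently `v, w ∈ L_o^{edge}` are related by finitely many
moves iff `σ(v)` and `σ(w)` are. -/
theorem stmt_11 (X Y : CC) (o : X.V) (σ : List X.S → X.S → Y.S)
    (hinj : ∀ v ∈ CC.Lang X o, Set.InjOn (σ v) (CC.EdgeAt X o v))
    (hcomm : ∀ v ∈ CC.Lang X o, ∀ s ∈ CC.EdgeAt X o v, ∀ t ∈ CC.EdgeAt X o v,
      (X.Comm s t ↔ Y.Comm (σ v s) (σ v t)))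
    (hpar : ∀ v ∈ CC.Lang X o, ∀ s ∈ CC.EdgeAt X o v, ∀ t ∈ CC.EdgeAt X o v,
      X.Comm s t → σ (v ++ [s]) t = σ v t)
    (hinv : ∀ v ∈ CC.Lang X o, ∀ s ∈ CC.EdgeAt X o v,
      σ (v ++ [s]) (X.inv s) = Y.inv (σ v s))
    (hend : ∀ v ∈ CC.Lang X o, ∀ w ∈ CC.Lang X o,
      CC.follow X v o = CC.follow X w o → σ v = σ w) :
    (∀ u1 u2 (s : X.S), u1 ++ s :: X.inv s :: u2 ∈ CC.Lang X o → u1 ++ u2 ∈ CC.Lang X o →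
      Cancel Y (sigmaW σ (u1 ++ s :: X.inv s :: u2)) (sigmaW σ (u1 ++ u2))) ∧
    (∀ u1 u2 (s t : X.S), X.Comm s t →
      u1 ++ s :: t :: u2 ∈ CC.Lang X o → u1 ++ t :: s :: u2 ∈ CC.Lang X o →
      Swap Y (sigmaW σ (u1 ++ s :: t :: u2)) (sigmaW σ (u1 ++ t :: s :: u2))) ∧
    (∀ v ∈ CC.Lang X o, ∀ w ∈ CC.Lang X o,
      (Relation.ReflTransGen (MoveL X o) v w ↔
        Relation.ReflTransGen (MoveFree Y) (sigmaW σ v) (sigmaW σ w))) := by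
  refine ⟨fun _ _ _ hv _ => cancel_sigmaW hinv hend hv,
    fun _ _ _ _ hC hv _ => swap_sigmaW hcomm hpar hend hC hv,
    fun v hv w hw => ⟨Relation.ReflTransGen.lift (sigmaW σ)
      (fun _ _ => MoveL.moveFree_sigmaW hcomm hpar hinv hend) v w, fun h => ?_⟩⟩
  obtain ⟨d, hvd, hwd⟩ := join_reduces_of_moveFree h
  obtain ⟨v', hv', hvv', rfl⟩ := exists_moveL_of_reduces hinj hcomm hpar hinv hend hv hvd
  obtain ⟨w', hw', hww', hw'v'⟩ := exists_moveL_of_reduces hinj hcomm hpar hinv hend hw hwd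
  obtain rfl := sigmaW_injOn hinj hw' hv' hw'v'
  exact hvv'.trans (symm hww')
end

section
/- Let X be a CAT(0) cube complex with a Λ-invariant cubical edge-labeling and cocompact action Λ ↷ X, and let S = X/Λ. Then S is special: S contains no self-intersecting hyperplane, no one-sided hyperplane, no self-osculating hyperplane, and no inter-osculating pair of hyperplanes. -/
/-- An (unlabeled) CAT(0) cube complex, recorded through its oriented edges,
edge reversal, the relation `Spans` (two oriented edges with the same source
spanning a square) and the one-step oriented parallelism `Par1` (opposite,
coherently oriented sides of a square). -/
structure ECC where
  V : Type
  E : Type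
  src : E → V
  tgt : E → V
  rev : E → E
  rev_rev : ∀ e, rev (rev e) = e
  rev_src : ∀ e, src (rev e) = tgt e
  rev_ne : ∀ e, rev e ≠ e
  Spans : E → E → Prop
  spans_src : ∀ e f, Spans e f → src e = src f
  spans_ne : ∀ e f, Spans e f → e ≠ f
  spans_symm : ∀ e f, Spans e f → Spans f e
  Par1 : E → E → Prop
  par1_symm : ∀ e f, Par1 e f → Par1 f e
  par1_rev : ∀ e f, Par1 e f → Par1 (rev e) (rev f)
  par_exists : ∀ e f, Spans e f → ∃ e', Par1 e e' ∧ src e' = tgt f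

/-- Oriented parallelism: the equivalence relation generated by `Par1`. -/
def OPar (X : ECC) : X.E → X.E → Prop := Relation.EqvGen X.Par1

/-- Two oriented edges of `X` project to parallel oriented edges of the quotient
`S = X/Λ`: some translate of the first is oriented-parallel to the second. -/
def Rrel (X : ECC) {G : Type} (actE : G → X.E → X.E) (e f : X.E) : Prop :=
  ∃ g : G, OPar X (actE g e) f

/-- if `X` carries a `Λ`-invariant cubical edge-labeling and `Λ`
acts cocompactly, then the quotient `S = X/Λ` is special: it has no
self-intersecting hyperplane, no one-sided hyperplane, no self-osculating
hyperplane, and no inter-osculating pair of hyperplanes (expressed upstairs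
via the relation `Rrel`). -/
theorem stmt_18 (X : ECC) (G : Type) [Group G]
    (actV : G → X.V → X.V) (actE : G → X.E → X.E)
    (honeE : ∀ e, actE 1 e = e)
    (hmulE : ∀ g h e, actE (g * h) e = actE g (actE h e))
    (hsrc : ∀ g e, X.src (actE g e) = actV g (X.src e))
    (hrev : ∀ g e, X.rev (actE g e) = actE g (X.rev e))
    (hspans : ∀ g e f, X.Spans e f → X.Spans (actE g e) (actE g f))
    (hpar : ∀ g e f, X.Par1 e f → X.Par1 (actE g e) (actE g f))
    (hcocpt : ∃ F : Set X.E, F.Finite ∧ ∀ e, ∃ g, ∃ f ∈ F, actE g f = e)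
    -- the Λ-invariant cubical edge-labeling
    (Lbl : Type) (ℓ : X.E → Lbl) (ι : Lbl → Lbl)
    (hfin : Finite Lbl) (hsurj : Function.Surjective ℓ)
    (hinj : ∀ e f, X.src e = X.src f → ℓ e = ℓ f → e = f)
    (hparc : ∀ e f, OPar X e f → ℓ e = ℓ f)
    (hsq : ∀ e f e' f', X.src e = X.src f → X.src e' = X.src f' →
      ℓ e = ℓ e' → ℓ f = ℓ f' → (X.Spans e f ↔ X.Spans e' f'))
    (hii : ∀ s, ι (ι s) = s) (hifpf : ∀ s, ι s ≠ s)
    (hlrev : ∀ e, ℓ (X.rev e) = ι (ℓ e))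
    (hinv : ∀ g e, ℓ (actE g e) = ℓ e) :
    -- no self-intersecting hyperplane in S
    (∀ e f, X.Spans e f → ¬ Rrel X actE e f) ∧
    -- every hyperplane of S is two-sided
    (∀ e, ¬ Rrel X actE e (X.rev e)) ∧
    -- no self-osculating hyperplane in S
    (∀ e f, X.src e = X.src f → e ≠ f → ¬ Rrel X actE e f) ∧
    -- no inter-osculating pair of hyperplanes in S
    (∀ e f e' f', X.src e = X.src f → X.src e' = X.src f' →
      Rrel X actE e e' → Rrel X actE f f' → (X.Spans e f ↔ X.Spans e' f')) := by
  have key : ∀ e f, Rrel X actE e f → ℓ e = ℓ f := by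
    rintro e f ⟨g, hpar⟩
    have := hparc _ _ hpar
    rw [hinv] at this
    exact this
  refine ⟨?_, ?_, ?_, ?_⟩
  · intro e f hS hR
    exact X.spans_ne e f hS (hinj e f (X.spans_src e f hS) (key e f hR))
  · intro e hR
    have := key e (X.rev e) hR
    rw [hlrev] at this
    exact hifpf (ℓ e) this.symm
  · intro e f hsrcef hne hR
    exact hne (hinj e f hsrcef (key e f hR))
  · intro e f e' f' h1 h2 hR1 hR2
    exact hsq e f e' f' h1 h2 (key e e' hR1) (key f f' hR2)
end
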